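/- Let m ≤ n and let p be a monic real polynomial of degree m with m distinct real roots λ_1, …, λ_m. Define the two-variable polynomial P(x,y) = y^{n−m} p(xy) and q(x,y,θ) = Σ_{k≥0} ((−θ)^k/k!) ∂_x^k ∂_y^k P(x,y) (a finite sum). Fix an index i and suppose r is a real-valued function, differentiable at 0, with r(0) = λ_i and q(r(θ), 1, θ) = 0 for all θ in a neighborhood of 0. Then r'(0) = n + Σ_{j≠i} (λ_i + λ_j)/(λ_i − λ_j). -/

import Mathlib

/-!
Differentiating `q(r θ, 1, θ) = 0` at `θ = 0`, only the terms `k = 0` and `k = 1` of the sum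
contribute. Since `P(x, 1) = p(x)` and `(∂ₓ∂ᵧP)(x, 1) = (n - m + 1) p'(x) + x p''(x)`, this gives
`p'(λᵢ) r'(0) = (n - m + 1) p'(λᵢ) + λᵢ p''(λᵢ)`. For `p = ∏ (X - λⱼ)` with distinct roots,
`p''(λᵢ) = 2 p'(λᵢ) ∑_{j ≠ i} 1 / (λᵢ - λⱼ)` and `p'(λᵢ) ≠ 0`, and
`2λᵢ / (λᵢ - λⱼ) = (λᵢ + λⱼ) / (λᵢ - λⱼ) + 1`.
-/

open Polynomial Filter Topology

namespace Polynomial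

variable {K : Type*} [Field K]

theorem eq_prod_X_sub_C_of_monic_of_injective {ι : Type*} [Fintype ι] {p : K[X]} (hp : p.Monic)
    (hdeg : p.natDegree = Fintype.card ι) {lam : ι → K} (hinj : Function.Injective lam)
    (hroots : ∀ j, p.eval (lam j) = 0) :
    p = ∏ j, (X - C (lam j)) :=
  eq_of_monic_of_dvd_of_natDegree_le (monic_prod_X_sub_C lam _) hp
    (Fintype.prod_dvd_of_coprime (pairwise_coprime_X_sub_C hinj) fun j =>
      dvd_iff_isRoot.mpr (hroots j))
    (by simp [hdeg])

theorem eval_derivative_X_sub_C_mul (a : K) (g : K[X]) :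
    eval a (derivative ((X - C a) * g)) = eval a g := by
  simp [derivative_mul]

theorem eval_derivative_derivative_X_sub_C_mul (a : K) (g : K[X]) :
    eval a (derivative (derivative ((X - C a) * g))) = 2 * eval a (derivative g) := by
  simp [derivative_mul]
  ring

theorem eval_derivative_prod_X_sub_C {ι : Type*} [DecidableEq ι] (s : Finset ι) (μ : ι → K)
    {x : K} (hx : ∀ j ∈ s, x ≠ μ j) :
    eval x (derivative (∏ j ∈ s, (X - C (μ j)))) =
      (∏ j ∈ s, (x - μ j)) * ∑ j ∈ s, (x - μ j)⁻¹ := by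
  rw [derivative_prod_finset, eval_finsetSum, Finset.mul_sum]
  refine Finset.sum_congr rfl fun j hj => ?_
  rw [← Finset.mul_prod_erase s _ hj, mul_comm (x - μ j), mul_assoc,
    mul_inv_cancel₀ (sub_ne_zero.mpr (hx j hj))]
  simp [eval_prod]

theorem eval_derivative_derivative_prod_X_sub_C {ι : Type*} [Fintype ι] [DecidableEq ι]
    {lam : ι → K} (hinj : Function.Injective lam) (i : ι) :
    eval (lam i) (derivative (derivative (∏ j, (X - C (lam j))))) =
      2 * eval (lam i) (derivative (∏ j, (X - C (lam j)))) *
        ∑ j ∈ Finset.univ.erase i, (lam i - lam j)⁻¹ := by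
  have hne : ∀ j ∈ Finset.univ.erase i, lam i ≠ lam j := fun j hj =>
    hinj.ne (Finset.ne_of_mem_erase hj).symm
  rw [← Finset.mul_prod_erase _ _ (Finset.mem_univ i), eval_derivative_X_sub_C_mul,
    eval_derivative_derivative_X_sub_C_mul, eval_derivative_prod_X_sub_C _ _ hne, eval_prod]
  simp only [eval_sub, eval_X, eval_C]
  ring

theorem eval_derivative_prod_X_sub_C_ne_zero {ι : Type*} [Fintype ι] [DecidableEq ι]
    {lam : ι → K} (hinj : Function.Injective lam) (i : ι) :
    eval (lam i) (derivative (∏ j, (X - C (lam j)))) ≠ 0 := by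
  rw [← Finset.mul_prod_erase _ _ (Finset.mem_univ i), eval_derivative_X_sub_C_mul, eval_prod]
  exact Finset.prod_ne_zero_iff.mpr fun j hj => by
    simpa [sub_eq_zero] using hinj.ne (Finset.ne_of_mem_erase hj).symm

end Polynomial

theorem Finset.sum_add_div_sub_eq {K ι : Type*} [Field K] (s : Finset ι) (a : K) (μ : ι → K)
    (h : ∀ j ∈ s, a ≠ μ j) :
    ∑ j ∈ s, (a + μ j) / (a - μ j) = 2 * a * ∑ j ∈ s, (a - μ j)⁻¹ - s.card := by
  rw [Finset.mul_sum, Finset.card_eq_sum_ones, Nat.cast_sum, ← Finset.sum_sub_distrib]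
  refine Finset.sum_congr rfl fun j hj => ?_
  field_simp [sub_ne_zero.mpr (h j hj)]
  ring

namespace MvPolynomial

variable {R : Type*} [CommRing R]

theorem eval_vecCons_one (x : R) (S : MvPolynomial (Fin 2) R) :
    eval ![x, 1] S = (aeval ![Polynomial.X, 1] S).eval x := by
  have hx : (fun i : Fin 2 => Polynomial.aeval x (![Polynomial.X, 1] i : R[X])) = ![x, 1] := by
    ext i
    fin_cases i <;> simp
  rw [← Polynomial.coe_aeval_eq_eval, comp_aeval_apply, hx]
  rfl

theorem aeval_vecCons_one_X_pow_mul_aeval (a : ℕ) (p : R[X]) :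
    aeval ![Polynomial.X, 1] ((X 1 : MvPolynomial (Fin 2) R) ^ a * Polynomial.aeval (X 0 * X 1) p)
      = p := by
  rw [map_mul, map_pow, ← Polynomial.aeval_algHom_apply]
  simp

theorem aeval_vecCons_one_pderiv_pderiv_X_pow_mul_aeval (a : ℕ) (p : R[X]) :
    aeval ![Polynomial.X, 1] (pderiv 0 (pderiv 1
        ((X 1 : MvPolynomial (Fin 2) R) ^ a * Polynomial.aeval (X 0 * X 1) p)))
      = ((a : R[X]) + 1) * derivative p + Polynomial.X * derivative (derivative p) := by
  have hd (i : Fin 2) (f : MvPolynomial (Fin 2) R) (q : R[X]) :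
      pderiv i (Polynomial.aeval f q) = Polynomial.aeval f (derivative q) * pderiv i f := by
    rw [Derivation.comp_aeval_eq, smul_eq_mul]
  simp only [pderiv_mul, pderiv_pow, hd, pderiv_X_self,
    pderiv_X_of_ne (show (0 : Fin 2) ≠ 1 by decide),
    pderiv_X_of_ne (show (1 : Fin 2) ≠ 0 by decide), Derivation.map_natCast,
    mul_one, mul_zero, zero_mul, add_zero, zero_add,
    map_add, map_mul, map_pow, map_natCast, map_one, ← Polynomial.aeval_algHom_apply, aeval_X,
    Matrix.cons_val_zero, Matrix.cons_val_one, one_pow, Polynomial.aeval_X_left_apply]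
  ring

end MvPolynomial

theorem hasDerivAt_sum_neg_pow_div_factorial_mul_eval (f : ℕ → ℝ[X]) {N : ℕ} (hN : 2 ≤ N)
    {r : ℝ → ℝ} {r' : ℝ} (hr : HasDerivAt r r' 0) :
    HasDerivAt (fun θ => ∑ k ∈ Finset.range N, (-θ) ^ k / k.factorial * (f k).eval (r θ))
      ((derivative (f 0)).eval (r 0) * r' - (f 1).eval (r 0)) 0 := by
  have hterm (k : ℕ) : HasDerivAt (fun θ : ℝ => (-θ) ^ k / k.factorial * (f k).eval (r θ))
      (k * (-0 : ℝ) ^ (k - 1) * (-1) / k.factorial * (f k).eval (r 0) +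
        (-0 : ℝ) ^ k / k.factorial * ((derivative (f k)).eval (r 0) * r')) 0 :=
    (((hasDerivAt_neg 0).pow k).div_const _).mul ((f k).hasDerivAt (r 0) |>.comp 0 hr)
  obtain ⟨N, rfl⟩ := Nat.exists_eq_add_of_le' hN
  refine (HasDerivAt.fun_sum fun k _ => hterm k).congr_deriv ?_
  rw [Finset.sum_range_succ', Finset.sum_range_succ', Finset.sum_eq_zero fun k _ => by simp]
  simp only [zero_add, Nat.cast_one, neg_zero, tsub_self, pow_zero, mul_one, mul_neg,
    Nat.factorial_one, div_one, neg_mul, one_mul, pow_one, zero_mul, add_zero, CharP.cast_eq_zero,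
    zero_tsub, Nat.factorial_zero, div_self one_ne_zero]
  ring

theorem eval_derivative_mul_deriv_eq_of_eventually_sum_eq_zero (f : ℕ → ℝ[X]) {N : ℕ}
    (hN : 2 ≤ N) {r : ℝ → ℝ} (hr : DifferentiableAt ℝ r 0)
    (hq : ∀ᶠ θ in 𝓝 0, ∑ k ∈ Finset.range N, (-θ) ^ k / k.factorial * (f k).eval (r θ) = 0) :
    (derivative (f 0)).eval (r 0) * deriv r 0 = (f 1).eval (r 0) :=
  sub_eq_zero.mp <| (hasDerivAt_sum_neg_pow_div_factorial_mul_eval f hN hr.hasDerivAt).unique <|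
    (hasDerivAt_const 0 0).congr_of_eventuallyEq hq

theorem stmt7 (m n : ℕ) (hmn : m ≤ n) (p : ℝ[X]) (hmonic : p.Monic) (hdeg : p.natDegree = m)
    (lam : Fin m → ℝ) (hinj : Function.Injective lam)
    (hroots : ∀ j, p.eval (lam j) = 0)
    (i : Fin m) (r : ℝ → ℝ) (hr : DifferentiableAt ℝ r 0) (hr0 : r 0 = lam i)
    -- `q(r(θ), 1, θ) = 0` for `θ` near `0`, where
    -- `q(·,·,θ) = Σ_k ((−θ)^k/k!) ∂_x^k ∂_y^k [y^(n−m) p(x·y)]`: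
    (hq : ∀ᶠ θ in nhds (0 : ℝ),
      MvPolynomial.eval ![r θ, 1]
        (∑ k ∈ Finset.range (m + 1), ((-θ) ^ k / (k.factorial : ℝ)) •
          (fun s => MvPolynomial.pderiv 0 s)^[k]
            ((fun s => MvPolynomial.pderiv 1 s)^[k]
              ((MvPolynomial.X 1 : MvPolynomial (Fin 2) ℝ) ^ (n - m) *
                Polynomial.eval₂ MvPolynomial.C
                  (MvPolynomial.X 0 * MvPolynomial.X 1) p))) = 0) :
    deriv r 0 = n + ∑ j ∈ Finset.univ.erase i, (lam i + lam j) / (lam i - lam j) := by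
  set P : MvPolynomial (Fin 2) ℝ := MvPolynomial.X 1 ^ (n - m) *
    Polynomial.aeval (MvPolynomial.X 0 * MvPolynomial.X 1) p
  set f : ℕ → ℝ[X] := fun k => MvPolynomial.aeval ![X, 1]
    ((fun s => MvPolynomial.pderiv 0 s)^[k] ((fun s => MvPolynomial.pderiv 1 s)^[k] P))
  have hkey := eval_derivative_mul_deriv_eq_of_eventually_sum_eq_zero f (N := m + 1)
    (Nat.succ_le_succ i.pos) hr (by
      filter_upwards [hq] with θ hθ
      simp only [map_sum, MvPolynomial.smul_eval, MvPolynomial.eval_vecCons_one] at hθ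
      -- `Polynomial.aeval` unfolds to the `eval₂ MvPolynomial.C` of the hypothesis
      exact hθ)
  have hf0 : f 0 = p := MvPolynomial.aeval_vecCons_one_X_pow_mul_aeval _ _
  have hf1 : f 1 = (((n - m : ℕ) : ℝ[X]) + 1) * derivative p + X * derivative (derivative p) :=
    MvPolynomial.aeval_vecCons_one_pderiv_pderiv_X_pow_mul_aeval _ _
  have hp := eq_prod_X_sub_C_of_monic_of_injective hmonic (by simpa using hdeg) hinj hroots
  rw [hf0, hf1, hr0, hp, eval_add, eval_mul, eval_mul, eval_add, eval_natCast, eval_one, eval_X,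
    eval_derivative_derivative_prod_X_sub_C hinj, Nat.cast_sub hmn] at hkey
  refine mul_left_cancel₀ (eval_derivative_prod_X_sub_C_ne_zero hinj i) ?_
  rw [Finset.sum_add_div_sub_eq _ _ _ fun j hj => hinj.ne (Finset.ne_of_mem_erase hj).symm,
    Finset.card_erase_of_mem (Finset.mem_univ i), Finset.card_univ, Fintype.card_fin,
    Nat.cast_sub i.pos, Nat.cast_one]
  linear_combination hkey
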